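/- If a concurrent program P with k threads has a sequentially consistent interleaving with at most π preemptions, then there exists a set 𝒫 of at most π events (none the last of its thread) and an ordering of the resulting π′ + k blocks (π′ = |𝒫| ≤ π), extending per-thread block order, whose induced event sequence is sequentially consistent and in which no two consecutive blocks belong to the same thread. -/

import Mathlib

/-- Memory events: reads and writes of natural-number values to variables of type `V`. -/
inductive Event (V : Type) where
  | read  (x : V) (d : ℕ)
  | write (x : V) (d : ℕ)
deriving DecidableEq

variable {V ι : Type}

/-- A sequence of events is sequentially consistent (SC): every read `r(x,d)` has a
preceding write `w(x,d)` with no write of a different value to `x` in between. -/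
def SC (σ : List (Event V)) : Prop :=
  ∀ (p : ℕ) x d, σ[p]? = some (Event.read x d) →
    ∃ q, q < p ∧ σ[q]? = some (Event.write x d) ∧
      ∀ r, q < r → r < p → ∀ d', d' ≠ d → σ[r]? ≠ some (Event.write x d')

/-- `σ` is an interleaving of the given threads: its restriction to each
thread identifier equals that thread's event sequence. -/
def IsInterleaving [DecidableEq ι] (threads : ι → List (Event V)) (σ : List (ι × Event V)) : Prop :=
  ∀ i, σ.filterMap (fun a => if a.1 = i then some a.2 else none) = threads i

/-- A preemption occurs at position `j`: the events at `j` and `j+1` are from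
different threads and the event at `j` is not the last event of its thread. -/
def PreemptionAt (σ : List (ι × Event V)) (j : ℕ) : Prop :=
  ∃ a b, σ[j]? = some a ∧ σ[j + 1]? = some b ∧ a.1 ≠ b.1 ∧
    ∃ r c, j < r ∧ σ[r]? = some c ∧ c.1 = a.1

open Classical in
/-- The number of preemption positions of `σ`. -/
noncomputable def numPreemptions (σ : List (ι × Event V)) : ℕ :=
  ((Finset.range σ.length).filter fun j => PreemptionAt σ j).card

open Classical in
/-- The number of context switches of `σ` (adjacent events of different threads). -/
noncomputable def numSwitches (σ : List (ι × Event V)) : ℕ :=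
  ((Finset.range σ.length).filter fun j =>
    ∃ a b, σ[j]? = some a ∧ σ[j + 1]? = some b ∧ a.1 ≠ b.1).card

/-- The (increasing) list of positions of `σ` carrying events of thread `i`. -/
def threadPositions [DecidableEq ι] (σ : List (ι × Event V)) (i : ι) : List ℕ :=
  (List.range σ.length).filter fun p => decide ((σ[p]?).map Prod.fst = some i)

/-- The position in `σ` of the `j`-th event of thread `i`. -/
def posOf [DecidableEq ι] (σ : List (ι × Event V)) (i : ι) (j : ℕ) : ℕ :=
  (threadPositions σ i).getD j 0

/-- All events of thread `t` occur before all events of thread `t'` in `σ`. -/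
def ThreadBefore [DecidableEq ι] (σ : List (ι × Event V)) (t t' : ι) : Prop :=
  ∀ p ∈ threadPositions σ t, ∀ q ∈ threadPositions σ t', p < q

/-- The event is a write to variable `x`. -/
def writesTo (x : V) : Event V → Prop
  | Event.write y _ => y = x
  | _ => False

/-- A 1-writer program: for each variable, a single thread performs all writes to it. -/
def OneWriter (threads : ι → List (Event V)) : Prop :=
  ∀ x i i', (∃ e ∈ threads i, writesTo x e) → (∃ e ∈ threads i', writesTo x e) → i = i'

/-- The events of thread `i` from its index `s` onwards appear contiguously in `σ`. -/
def ContiguousFrom [DecidableEq ι] (σ : List (ι × Event V)) (i : ι) (s : ℕ) : Prop :=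
  ∀ j, s ≤ j → j + 1 < (threadPositions σ i).length → posOf σ i (j + 1) = posOf σ i j + 1

/-- Conflict-graph edge `tr → tw` between outer blocks (suffixes of the threads
starting at indices `s tr`, `s tw`): the last write to some variable `x` in the
outer block of `tw` conflicts with a read of `x` in the outer block of `tr`. -/
def ConflictEdge [DecidableEq ι] (threads : ι → List (Event V)) (s : ι → ℕ) (tr tw : ι) : Prop :=
  tr ≠ tw ∧ ∃ x d d' jr jw, d ≠ d' ∧
    s tr ≤ jr ∧ (threads tr)[jr]? = some (Event.read x d) ∧
    s tw ≤ jw ∧ (threads tw)[jw]? = some (Event.write x d') ∧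
    ∀ j d'', jw < j → (threads tw)[j]? ≠ some (Event.write x d'')

/-- Splitting a list into contiguous blocks immediately after each position in `cut`. -/
def splitAtCuts {α : Type} (l : List α) (cut : Finset ℕ) : List (List α) :=
  let cs := cut.sort (· ≤ ·)
  ((0 :: cs.map (· + 1)).zip (cs.map (· + 1) ++ [l.length])).map fun p => (l.take p.2).drop p.1

/-!
Take the given interleaving `σ` itself as the block ordering, and cut thread `i` after its
`j`-th event exactly when its `(j+1)`-th event is not adjacent to it in `σ`. Then the event
right after a cut belongs to another thread, while a later event of thread `i` exists, so every
cut sits at a preemption position of `σ`; distinct cuts sit at distinct positions, so there are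
at most `π` of them. Ordering and sequential consistency are inherited from `σ`.
-/

section ThreadPositions

variable [DecidableEq ι]

lemma mem_threadPositions_iff {σ : List (ι × Event V)} {i : ι} {p : ℕ} :
    p ∈ threadPositions σ i ↔ ∃ a, σ[p]? = some a ∧ a.1 = i := by
  rw [← Option.map_eq_some_iff]
  unfold threadPositions
  simp only [List.mem_filter, List.mem_range, decide_eq_true_eq, and_iff_right_iff_imp]
  intro h
  by_contra hlen
  simp [List.getElem?_eq_none (le_of_not_gt hlen)] at h

lemma threadPositions_cons (a : ι × Event V) (σ : List (ι × Event V)) (i : ι) :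
    threadPositions (a :: σ) i =
      (if a.1 = i then [0] else []) ++ (threadPositions σ i).map Nat.succ := by
  unfold threadPositions
  rw [List.length_cons, List.range_succ_eq_map, List.filter_cons, List.filter_map]
  by_cases h : a.1 = i <;> simp [h, Function.comp_def]

lemma length_threadPositions (σ : List (ι × Event V)) (i : ι) :
    (threadPositions σ i).length =
      (σ.filterMap fun a => if a.1 = i then some a.2 else none).length := by
  induction σ with
  | nil => simp [threadPositions]
  | cons a σ ih =>
    rw [threadPositions_cons, List.filterMap_cons]
    by_cases h : a.1 = i <;> simp [h, ih]

lemma IsInterleaving.length_threadPositions {threads : ι → List (Event V)}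
    {σ : List (ι × Event V)} (hσ : IsInterleaving threads σ) (i : ι) :
    (threadPositions σ i).length = (threads i).length := by
  rw [_root_.length_threadPositions, hσ i]

lemma posOf_eq_getElem {σ : List (ι × Event V)} {i : ι} {j : ℕ}
    (hj : j < (threadPositions σ i).length) :
    posOf σ i j = (threadPositions σ i)[j] :=
  List.getD_eq_getElem _ _ hj

lemma posOf_mem_threadPositions {σ : List (ι × Event V)} {i : ι} {j : ℕ}
    (hj : j < (threadPositions σ i).length) :
    posOf σ i j ∈ threadPositions σ i := by
  rw [posOf_eq_getElem hj]
  exact List.getElem_mem hj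

lemma posOf_lt_posOf_iff {σ : List (ι × Event V)} {i : ι} {j m : ℕ}
    (hj : j < (threadPositions σ i).length) (hm : m < (threadPositions σ i).length) :
    posOf σ i j < posOf σ i m ↔ j < m := by
  have hmono : StrictMono (threadPositions σ i).get :=
    (List.Pairwise.filter _ List.pairwise_lt_range).sortedLT.strictMono_get
  rw [posOf_eq_getElem hj, posOf_eq_getElem hm]
  exact hmono.lt_iff_lt (a := ⟨j, hj⟩) (b := ⟨m, hm⟩)

lemma eq_and_eq_of_posOf_eq {σ : List (ι × Event V)} {i i' : ι} {j j' : ℕ}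
    (hj : j < (threadPositions σ i).length) (hj' : j' < (threadPositions σ i').length)
    (h : posOf σ i j = posOf σ i' j') :
    i = i' ∧ j = j' := by
  obtain ⟨a, ha, rfl⟩ := mem_threadPositions_iff.1 (posOf_mem_threadPositions hj)
  obtain ⟨a', ha', rfl⟩ := mem_threadPositions_iff.1 (posOf_mem_threadPositions hj')
  rw [h, ha'] at ha
  cases Option.some_injective _ ha
  refine ⟨rfl, ?_⟩
  by_contra hne
  rcases Nat.lt_or_gt_of_ne hne with hlt | hlt
  · exact ((posOf_lt_posOf_iff hj hj').2 hlt).ne h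
  · exact ((posOf_lt_posOf_iff hj' hj).2 hlt).ne' h

lemma fst_ne_of_posOf_lt_of_lt_posOf_succ {σ : List (ι × Event V)} {i : ι} {j q : ℕ}
    (hj : j + 1 < (threadPositions σ i).length)
    (hlo : posOf σ i j < q) (hhi : q < posOf σ i (j + 1)) :
    (σ[q]?).map Prod.fst ≠ some i := by
  intro hq
  obtain ⟨m, hm, rfl⟩ := List.mem_iff_getElem.1 (mem_threadPositions_iff.2
    (Option.map_eq_some_iff.1 hq))
  rw [← posOf_eq_getElem hm] at hlo hhi
  have := (posOf_lt_posOf_iff (by omega) hm).1 hlo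
  have := (posOf_lt_posOf_iff hm hj).1 hhi
  omega

def preemptionCuts (σ : List (ι × Event V)) (i : ι) : Finset ℕ :=
  (Finset.range (threadPositions σ i).length).filter fun j =>
    j + 1 < (threadPositions σ i).length ∧ posOf σ i (j + 1) ≠ posOf σ i j + 1

lemma mem_preemptionCuts {σ : List (ι × Event V)} {i : ι} {j : ℕ} :
    j ∈ preemptionCuts σ i ↔
      j + 1 < (threadPositions σ i).length ∧ posOf σ i (j + 1) ≠ posOf σ i j + 1 := by
  simp only [preemptionCuts, Finset.mem_filter, Finset.mem_range, and_iff_right_iff_imp]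
  omega

lemma lt_length_of_mem_preemptionCuts {σ : List (ι × Event V)} {i : ι} {j : ℕ}
    (hcut : j ∈ preemptionCuts σ i) : j < (threadPositions σ i).length :=
  Finset.mem_range.1 (Finset.mem_filter.1 hcut).1

lemma posOf_succ_eq_of_not_mem_preemptionCuts {σ : List (ι × Event V)} {i : ι} {j : ℕ}
    (hj : j + 1 < (threadPositions σ i).length) (hcut : j ∉ preemptionCuts σ i) :
    posOf σ i (j + 1) = posOf σ i j + 1 := by
  by_contra hne
  exact hcut (mem_preemptionCuts.2 ⟨hj, hne⟩)

lemma posOf_add_one_lt_of_mem_preemptionCuts {σ : List (ι × Event V)} {i : ι} {j : ℕ}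
    (hcut : j ∈ preemptionCuts σ i) :
    posOf σ i j + 1 < posOf σ i (j + 1) := by
  obtain ⟨hj, hne⟩ := mem_preemptionCuts.1 hcut
  have := (posOf_lt_posOf_iff (by omega) hj).2 (Nat.lt_succ_self j)
  omega

lemma fst_ne_of_mem_preemptionCuts {σ : List (ι × Event V)} {i : ι} {j : ℕ}
    (hcut : j ∈ preemptionCuts σ i) :
    (σ[posOf σ i j + 1]?).map Prod.fst ≠ some i :=
  fst_ne_of_posOf_lt_of_lt_posOf_succ (mem_preemptionCuts.1 hcut).1 (Nat.lt_succ_self _)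
    (posOf_add_one_lt_of_mem_preemptionCuts hcut)

lemma preemptionAt_posOf_of_mem_preemptionCuts {σ : List (ι × Event V)} {i : ι} {j : ℕ}
    (hcut : j ∈ preemptionCuts σ i) :
    PreemptionAt σ (posOf σ i j) := by
  have hj := (mem_preemptionCuts.1 hcut).1
  have hgap := posOf_add_one_lt_of_mem_preemptionCuts hcut
  obtain ⟨a, ha, hai⟩ := mem_threadPositions_iff.1
    (posOf_mem_threadPositions (lt_length_of_mem_preemptionCuts hcut))
  obtain ⟨c, hc, hci⟩ := mem_threadPositions_iff.1 (posOf_mem_threadPositions hj)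
  obtain ⟨b, hb⟩ : ∃ b, σ[posOf σ i j + 1]? = some b := by
    have := (List.getElem?_eq_some_iff.1 hc).1
    exact ⟨_, List.getElem?_eq_getElem (by omega)⟩
  have hbi : b.1 ≠ i := fun h => fst_ne_of_mem_preemptionCuts hcut (by simp [hb, h])
  exact ⟨a, b, ha, hb, by rw [hai]; exact hbi.symm, _, c, by omega, hc, hci.trans hai.symm⟩

lemma sum_card_preemptionCuts_le [Fintype ι] (σ : List (ι × Event V)) :
    ∑ i, (preemptionCuts σ i).card ≤ numPreemptions σ := by
  rw [← Finset.card_sigma]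
  refine Finset.card_le_card_of_injOn (fun p => posOf σ p.1 p.2) ?_ ?_
  · rintro ⟨i, j⟩ hj
    have hcut : j ∈ preemptionCuts σ i := (Finset.mem_sigma.1 hj).2
    obtain ⟨a, ha, -⟩ := mem_threadPositions_iff.1
      (posOf_mem_threadPositions (lt_length_of_mem_preemptionCuts hcut))
    simp only [Finset.coe_filter, Finset.mem_range, Set.mem_ofPred_eq]
    exact ⟨(List.getElem?_eq_some_iff.1 ha).1, preemptionAt_posOf_of_mem_preemptionCuts hcut⟩
  · rintro ⟨i, j⟩ hj ⟨i', j'⟩ hj' heq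
    have hjlt := lt_length_of_mem_preemptionCuts (Finset.mem_sigma.1 hj).2
    have hjlt' := lt_length_of_mem_preemptionCuts (Finset.mem_sigma.1 hj').2
    obtain ⟨rfl, rfl⟩ := eq_and_eq_of_posOf_eq hjlt hjlt' heq
    rfl

end ThreadPositions

/-- if a program has an SC interleaving with at most `π` preemptions,
then there is a set of at most `π` preemption points (none the last of its thread) and
an SC ordering of the resulting blocks, extending per-thread block order, in which
blocks appear contiguously and no two consecutive blocks belong to the same thread. -/
theorem stmt18 {V : Type} (k π : ℕ) (threads : Fin k → List (Event V))
    (σ : List (Fin k × Event V))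
    (hσ : IsInterleaving threads σ)
    (hsc : SC (σ.map Prod.snd))
    (hp : numPreemptions σ ≤ π) :
    ∃ cuts : Fin k → Finset ℕ,
      (∀ i, ∀ c ∈ cuts i, c + 1 < (threads i).length) ∧
      (∑ i, (cuts i).card) ≤ π ∧
      ∃ τ : List (Fin k × Event V),
        IsInterleaving threads τ ∧ SC (τ.map Prod.snd) ∧
        (∀ i j, j + 1 < (threads i).length → j ∉ cuts i →
            posOf τ i (j + 1) = posOf τ i j + 1) ∧
        (∀ i, ∀ c ∈ cuts i, (τ[posOf τ i c + 1]?).map Prod.fst ≠ some i) := by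
  refine ⟨preemptionCuts σ, fun i c hc => ?_, (sum_card_preemptionCuts_le σ).trans hp,
    σ, hσ, hsc, fun i j hj hcut => ?_, fun i c hc => fst_ne_of_mem_preemptionCuts hc⟩
  · rw [← hσ.length_threadPositions]
    exact (mem_preemptionCuts.1 hc).1
  · rw [← hσ.length_threadPositions] at hj
    exact posOf_succ_eq_of_not_mem_preemptionCuts hj hcut
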